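/- arXiv:2112.04103 — 5 statements merged into one kernel-verified Lean document; each statement's English description precedes it below -/
import Mathlib

section
/- Let A be a unital *-algebra over ℂ with unit I. Define A∙B = AB + BA* and [A,B]_* = AB - BA*. If Φ: A → A satisfies Φ([A∙B, C]_*) = [Φ(A)∙B, C]_* + [A∙Φ(B), C]_* + [A∙B, Φ(C)]_* for all A, B, C, then Φ(I) commutes with every element of A, i.e., Φ(I)A = AΦ(I) for all A in A. -/
/-- Jordan `*`-product: `A ∙ B = AB + BA*`. -/
def jord {A : Type*} [Mul A] [Add A] [Star A] (a b : A) : A := a * b + b * star a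

/-- Skew Lie product: `[A,B]_* = AB - BA*`. -/
def skw {A : Type*} [Mul A] [Sub A] [Star A] (a b : A) : A := a * b - b * star a

theorem stmt2 {A : Type*} [Ring A] [StarRing A] [Algebra ℂ A] (Φ : A → A)
    (hΦ : ∀ a b c : A, Φ (skw (jord a b) c) =
      skw (jord (Φ a) b) c + skw (jord a (Φ b)) c + skw (jord a b) (Φ c)) :
    ∀ a : A, Φ 1 * a = a * Φ 1 := by
  intro a
  have h0 : Φ 0 = 0 := by
    have h := hΦ 1 1 0; simp [jord, skw] at h; rw [h]; noncomm_ring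
  have h1 := hΦ 1 1 1
  have h2 := hΦ 1 1 a
  simp [jord, skw, h0, add_mul, mul_add, one_mul, mul_one] at h1 h2
  have hd : (2:ℂ) • (Φ 1 - star (Φ 1)) = 0 := by
    rw [two_smul]
    have := h1.symm
    abel_nf at this ⊢
    linear_combination (norm := abel) this
  have hs : star (Φ 1) = Φ 1 := by
    have hz : Φ 1 - star (Φ 1) = 0 := by
      calc Φ 1 - star (Φ 1) = (2:ℂ)⁻¹ • ((2:ℂ) • (Φ 1 - star (Φ 1))) := by
            rw [smul_smul]; norm_num
        _ = 0 := by rw [hd, smul_zero]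
    rw [sub_eq_zero] at hz; exact hz.symm
  rw [hs] at h2
  have hsum : (Φ 1 * a - a * Φ 1) + (Φ 1 * a - a * Φ 1) + (Φ 1 * a - a * Φ 1)
      + (Φ 1 * a - a * Φ 1) = 0 := by
    have := h2.symm
    abel_nf at this ⊢
    linear_combination (norm := abel) this
  have h4 : (4:ℂ) • (Φ 1 * a - a * Φ 1) = 0 := by
    rw [show (4:ℂ) = ((4:ℕ):ℂ) by norm_num, Nat.cast_smul_eq_nsmul]
    calc (4:ℕ) • (Φ 1 * a - a * Φ 1)
        = (Φ 1 * a - a * Φ 1) + (Φ 1 * a - a * Φ 1) + (Φ 1 * a - a * Φ 1)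
          + (Φ 1 * a - a * Φ 1) := by abel
      _ = 0 := hsum
  have hz : Φ 1 * a - a * Φ 1 = 0 := by
    calc Φ 1 * a - a * Φ 1 = (4:ℂ)⁻¹ • ((4:ℂ) • (Φ 1 * a - a * Φ 1)) := by
          rw [smul_smul]; norm_num
      _ = 0 := by rw [h4, smul_zero]
  exact sub_eq_zero.mp hz
end

section
/- Let A be a unital complex *-algebra with unit I containing a nontrivial projection P (P* = P = P², P ≠ 0, P ≠ I) such that XAP = {0} implies X = 0 and XA(I-P) = {0} implies X = 0. Then every map Φ: A → A satisfying Φ([A∙B, C]_*) = [Φ(A)∙B, C]_* + [A∙Φ(B), C]_* + [A∙B, Φ(C)]_* for all A, B, C (where A∙B = AB + BA* and [A,B]_* = AB - BA*) is additive: Φ(A + B) = Φ(A) + Φ(B) for all A, B. -/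
namespace Stmt3Aux
set_option linter.unusedSectionVars false

variable {A : Type*} [Ring A] [StarRing A] [Algebra ℂ A]

/-- expanded triple product -/
def FF (a b c : A) : A := (a*b + b*star a)*c - c*(star b * star a + a * star b)

lemma FF_def (a b c : A) : FF a b c = (a*b + b*star a)*c - c*(star b * star a + a * star b) := rfl

lemma skw_jord (a b c : A) : skw (jord a b) c = FF a b c := by
  simp [skw, jord, FF, star_add, star_mul, star_star]

lemma FF_add1 (a a' b c : A) : FF (a+a') b c = FF a b c + FF a' b c := by
  simp only [FF_def, star_add, add_mul, mul_add]; abel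

lemma FF_add2 (a b b' c : A) : FF a (b+b') c = FF a b c + FF a b' c := by
  simp only [FF_def, star_add, add_mul, mul_add]; abel

lemma FF_add3 (a b c c' : A) : FF a b (c+c') = FF a b c + FF a b c' := by
  simp only [FF_def, star_add, add_mul, mul_add]; abel

lemma FF_sub1 (a a' b c : A) : FF (a-a') b c = FF a b c - FF a' b c := by
  simp only [FF_def, star_sub, sub_mul, mul_sub, add_mul, mul_add]; abel

lemma FF_sub2 (a b b' c : A) : FF a (b-b') c = FF a b c - FF a b' c := by
  simp only [FF_def, star_sub, sub_mul, mul_sub, add_mul, mul_add]; abel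

lemma FF_sub3 (a b c c' : A) : FF a b (c-c') = FF a b c - FF a b c' := by
  simp only [FF_def, star_sub, sub_mul, mul_sub, add_mul, mul_add]; abel

lemma csmul_cancel (c : ℂ) (hc : c ≠ 0) (x : A) (h : c • x = 0) : x = 0 := by
  have h2 := congrArg (fun z => c⁻¹ • z) h
  simpa [smul_smul, inv_mul_cancel₀ hc] using h2

lemma half (x : A) (h : x + x = 0) : x = 0 := by
  apply csmul_cancel (2:ℂ) two_ne_zero
  rw [two_smul]; exact h

lemma quarter (x : A) (h : x + x + x + x = 0) : x = 0 := by
  apply half; apply half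
  calc x + x + (x + x) = x + x + x + x := by abel
  _ = 0 := h

section masters

variable (Φ : A → A) (hf : ∀ a b c, Φ (FF a b c) = FF (Φ a) b c + FF a (Φ b) c + FF a b (Φ c))
include hf

lemma phi_zero : Φ 0 = 0 := by
  have h := hf 0 0 0
  simpa [FF_def] using h

lemma master2eq (a c m₁ m₂ : A) :
    FF a (Φ (m₁+m₂) - Φ m₁ - Φ m₂) c
      = Φ (FF a (m₁+m₂) c) - Φ (FF a m₁ c) - Φ (FF a m₂ c) := by
  rw [hf, hf, hf, FF_sub2, FF_sub2, FF_add2 a m₁ m₂ (Φ c), FF_add2 (Φ a) m₁ m₂ c]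
  abel

lemma master1eq (b c m₁ m₂ : A) :
    FF (Φ (m₁+m₂) - Φ m₁ - Φ m₂) b c
      = Φ (FF (m₁+m₂) b c) - Φ (FF m₁ b c) - Φ (FF m₂ b c) := by
  rw [hf, hf, hf, FF_sub1, FF_sub1, FF_add1 m₁ m₂ b (Φ c), FF_add1 m₁ m₂ (Φ b) c]
  abel

lemma master3eq (a b m₁ m₂ : A) :
    FF a b (Φ (m₁+m₂) - Φ m₁ - Φ m₂)
      = Φ (FF a b (m₁+m₂)) - Φ (FF a b m₁) - Φ (FF a b m₂) := by
  rw [hf, hf, hf, FF_sub3, FF_sub3, FF_add3 (Φ a) b m₁ m₂, FF_add3 a (Φ b) m₁ m₂]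
  abel

lemma master2z {a c m₁ m₂ : A} (h₂ : FF a m₂ c = 0) :
    FF a (Φ (m₁+m₂) - Φ m₁ - Φ m₂) c = 0 := by
  rw [master2eq Φ hf, FF_add2, h₂, add_zero, phi_zero Φ hf, sub_zero, sub_self]

lemma master2z' {a c m₁ m₂ : A} (h₁ : FF a m₁ c = 0) :
    FF a (Φ (m₁+m₂) - Φ m₁ - Φ m₂) c = 0 := by
  rw [master2eq Φ hf, FF_add2, h₁, zero_add, phi_zero Φ hf, sub_zero, sub_self]

lemma master2zz {a c m₁ m₂ : A} (h₁ : FF a m₁ c = 0) (h₂ : FF a m₂ c = 0) :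
    FF a (Φ (m₁+m₂) - Φ m₁ - Φ m₂) c = 0 := by
  rw [master2eq Φ hf, FF_add2, h₁, h₂, add_zero, phi_zero Φ hf, sub_zero, sub_self]

lemma master2split {a c m₁ m₂ : A}
    (hs : Φ (FF a (m₁+m₂) c) = Φ (FF a m₁ c) + Φ (FF a m₂ c)) :
    FF a (Φ (m₁+m₂) - Φ m₁ - Φ m₂) c = 0 := by
  rw [master2eq Φ hf, hs]; abel

lemma master1z {b c m₁ m₂ : A} (h₂ : FF m₂ b c = 0) :
    FF (Φ (m₁+m₂) - Φ m₁ - Φ m₂) b c = 0 := by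
  rw [master1eq Φ hf, FF_add1, h₂, add_zero, phi_zero Φ hf, sub_zero, sub_self]

lemma master1z' {b c m₁ m₂ : A} (h₁ : FF m₁ b c = 0) :
    FF (Φ (m₁+m₂) - Φ m₁ - Φ m₂) b c = 0 := by
  rw [master1eq Φ hf, FF_add1, h₁, zero_add, phi_zero Φ hf, sub_zero, sub_self]

lemma master1zz {b c m₁ m₂ : A} (h₁ : FF m₁ b c = 0) (h₂ : FF m₂ b c = 0) :
    FF (Φ (m₁+m₂) - Φ m₁ - Φ m₂) b c = 0 := by
  rw [master1eq Φ hf, FF_add1, h₁, h₂, add_zero, phi_zero Φ hf, sub_zero, sub_self]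

lemma master3zz {a b m₁ m₂ : A} (h₁ : FF a b m₁ = 0) (h₂ : FF a b m₂ = 0) :
    FF a b (Φ (m₁+m₂) - Φ m₁ - Φ m₂) = 0 := by
  rw [master3eq Φ hf, FF_add3, h₁, h₂, add_zero, phi_zero Φ hf, sub_zero, sub_self]

end masters


lemma mul_mul₀ {x y : A} (h : x*y = 0) (w : A) : x*(y*w) = 0 := by
  rw [← mul_assoc, h, zero_mul]

lemma mul_mul₁ {x y z : A} (h : x*y = z) (w : A) : x*(y*w) = z*w := by
  rw [← mul_assoc, h]

structure Ctx (P Q : A) : Prop where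
  ps : star P = P
  pp : P*P = P
  q  : Q = 1 - P

namespace Ctx

variable {P Q : A} (hc : Ctx P Q)
include hc

lemma qs : star Q = Q := by rw [hc.q, star_sub, star_one, hc.ps]
lemma pq : P*Q = 0 := by rw [hc.q, mul_sub, mul_one, hc.pp, sub_self]
lemma qp : Q*P = 0 := by rw [hc.q, sub_mul, one_mul, hc.pp, sub_self]
lemma qq : Q*Q = Q := by
  rw [hc.q]; simp [mul_sub, sub_mul, hc.pp]
lemma paddq : P + Q = 1 := by rw [hc.q]; abel
lemma decomp (T : A) : T = P*(T*P) + P*(T*Q) + Q*(T*P) + Q*(T*Q) := by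
  have h1 : P*(T*P) + P*(T*Q) + Q*(T*P) + Q*(T*Q) = (P+Q)*(T*(P+Q)) := by
    simp only [mul_add, add_mul]; abel
  rw [h1, hc.paddq, mul_one, one_mul]

end Ctx

structure C11 (P Q x : A) : Prop where
  pa : P*x = x
  ap : x*P = x
  qa : Q*x = 0
  aq : x*Q = 0
  ps : P*star x = star x
  sp : star x*P = star x
  qs : Q*star x = 0
  sq : star x*Q = 0

structure C12 (P Q x : A) : Prop where
  pa : P*x = x
  ap : x*P = 0
  qa : Q*x = 0
  aq : x*Q = x
  ps : P*star x = 0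
  sp : star x*P = star x
  qs : Q*star x = star x
  sq : star x*Q = 0

structure C21 (P Q x : A) : Prop where
  pa : P*x = 0
  ap : x*P = x
  qa : Q*x = x
  aq : x*Q = 0
  ps : P*star x = star x
  sp : star x*P = 0
  qs : Q*star x = 0
  sq : star x*Q = star x

structure C22 (P Q x : A) : Prop where
  pa : P*x = 0
  ap : x*P = 0
  qa : Q*x = x
  aq : x*Q = x
  ps : P*star x = 0
  sp : star x*P = 0
  qs : Q*star x = star x
  sq : star x*Q = star x

section mk

variable {P Q x : A}

lemma star_left {y z : A} (h : y*x = z) (hy : star y = y) : star x * y = star z := by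
  have h2 := congrArg star h
  rwa [star_mul, hy] at h2

lemma star_right {y z : A} (h : x*y = z) (hy : star y = y) : y * star x = star z := by
  have h2 := congrArg star h
  rwa [star_mul, hy] at h2

lemma qmul_of (hc : Ctx P Q) (h : P*x = x) : Q*x = 0 := by rw [hc.q, sub_mul, one_mul, h, sub_self]
lemma qmul_of' (hc : Ctx P Q) (h : P*x = 0) : Q*x = x := by rw [hc.q, sub_mul, one_mul, h, sub_zero]
lemma mulq_of (hc : Ctx P Q) (h : x*P = x) : x*Q = 0 := by rw [hc.q, mul_sub, mul_one, h, sub_self]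
lemma mulq_of' (hc : Ctx P Q) (h : x*P = 0) : x*Q = x := by rw [hc.q, mul_sub, mul_one, h, sub_zero]

lemma mk11 (hc : Ctx P Q) (h1 : P*x = x) (h2 : x*P = x) : C11 P Q x := by
  have qa := qmul_of hc h1
  have aq := mulq_of hc h2
  exact ⟨h1, h2, qa, aq,
    star_right h2 hc.ps, star_left h1 hc.ps,
    by simpa using star_right aq hc.qs, by simpa using star_left qa hc.qs⟩

lemma mk12 (hc : Ctx P Q) (h1 : P*x = x) (h2 : x*P = 0) : C12 P Q x := by
  have qa := qmul_of hc h1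
  have aq := mulq_of' hc h2
  exact ⟨h1, h2, qa, aq,
    by simpa using star_right h2 hc.ps, star_left h1 hc.ps,
    star_right aq hc.qs, by simpa using star_left qa hc.qs⟩

lemma mk21 (hc : Ctx P Q) (h1 : P*x = 0) (h2 : x*P = x) : C21 P Q x := by
  have qa := qmul_of' hc h1
  have aq := mulq_of hc h2
  exact ⟨h1, h2, qa, aq,
    star_right h2 hc.ps, by simpa using star_left h1 hc.ps,
    by simpa using star_right aq hc.qs, star_left qa hc.qs⟩

lemma mk22 (hc : Ctx P Q) (h1 : P*x = 0) (h2 : x*P = 0) : C22 P Q x := by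
  have qa := qmul_of' hc h1
  have aq := mulq_of' hc h2
  exact ⟨h1, h2, qa, aq,
    by simpa using star_right h2 hc.ps, by simpa using star_left h1 hc.ps,
    star_right aq hc.qs, star_left qa hc.qs⟩

end mk

section closure

variable {P Q x y : A}

lemma C11.add (h1 : C11 P Q x) (h2 : C11 P Q y) : C11 P Q (x+y) := by
  constructor <;> simp [mul_add, add_mul, star_add, h1.pa, h2.pa, h1.ap, h2.ap, h1.qa, h2.qa,
    h1.aq, h2.aq, h1.ps, h2.ps, h1.sp, h2.sp, h1.qs, h2.qs, h1.sq, h2.sq]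

lemma C12.add (h1 : C12 P Q x) (h2 : C12 P Q y) : C12 P Q (x+y) := by
  constructor <;> simp [mul_add, add_mul, star_add, h1.pa, h2.pa, h1.ap, h2.ap, h1.qa, h2.qa,
    h1.aq, h2.aq, h1.ps, h2.ps, h1.sp, h2.sp, h1.qs, h2.qs, h1.sq, h2.sq]

lemma C21.add (h1 : C21 P Q x) (h2 : C21 P Q y) : C21 P Q (x+y) := by
  constructor <;> simp [mul_add, add_mul, star_add, h1.pa, h2.pa, h1.ap, h2.ap, h1.qa, h2.qa,
    h1.aq, h2.aq, h1.ps, h2.ps, h1.sp, h2.sp, h1.qs, h2.qs, h1.sq, h2.sq]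

lemma C22.add (h1 : C22 P Q x) (h2 : C22 P Q y) : C22 P Q (x+y) := by
  constructor <;> simp [mul_add, add_mul, star_add, h1.pa, h2.pa, h1.ap, h2.ap, h1.qa, h2.qa,
    h1.aq, h2.aq, h1.ps, h2.ps, h1.sp, h2.sp, h1.qs, h2.qs, h1.sq, h2.sq]

/-- `-star x` flips 12 ↔ 21 -/
lemma C12.negstar (h : C12 P Q x) : C21 P Q (-star x) := by
  constructor <;> simp [star_neg, star_star, h.pa, h.ap, h.qa, h.aq, h.ps, h.sp, h.qs, h.sq]

lemma C21.negstar (h : C21 P Q x) : C12 P Q (-star x) := by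
  constructor <;> simp [star_neg, star_star, h.pa, h.ap, h.qa, h.aq, h.ps, h.sp, h.qs, h.sq]

end closure


section P3
variable {P Q : A}

section values
variable (hc : Ctx P Q) {x y : A}
include hc

-- C12 values
lemma v12_PxP (h : C12 P Q x) : FF P x P = 0 := by
  simp [FF_def, add_mul, mul_add, hc.ps, h.pa, h.ap, h.sp, h.ps]
lemma v12_QxP (h : C12 P Q x) : FF Q x P = 0 := by
  simp [FF_def, add_mul, mul_add, hc.qs, h.qa, h.aq, h.sq, h.qs, h.ap, h.ps]
lemma v12_xPc (h : C12 P Q x) (c : A) : FF x P c = 0 := by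
  simp [FF_def, add_mul, mul_add, hc.ps, h.ap, h.ps]
lemma v12_QxQ (h : C12 P Q x) : FF Q x Q = x - star x := by
  simp [FF_def, add_mul, mul_add, hc.qs, h.qa, h.aq, h.sq, h.qs]
lemma v12_PxQ (h : C12 P Q x) : FF P x Q = x - star x := by
  simp [FF_def, add_mul, mul_add, hc.ps, hc.qs, h.pa, h.ap, h.aq, h.sp, h.ps, h.qs]
lemma v12_xQQ (h : C12 P Q x) : FF x Q Q = x - star x := by
  simp [FF_def, add_mul, mul_add, hc.qs, h.aq, h.qs, h.sq, h.qa]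
lemma v12_mul0 (h1 : C12 P Q x) (h2 : C12 P Q y) : x*y = 0 := by
  rw [← h2.pa, ← mul_assoc, h1.ap, zero_mul]
lemma v12_xyQ (h1 : C12 P Q x) (h2 : C12 P Q y) : FF x y Q = 0 := by
  have m0 := v12_mul0 hc h1 h2
  have m1 : star y * star x = 0 := by rw [← star_mul, m0, star_zero]
  simp [FF_def, add_mul, mul_add, hc.qs, m0, m1, mul_assoc, h1.sq, h2.aq, mul_mul₀ h1.qa]

-- C21 values
lemma v21_QxQ (h : C21 P Q x) : FF Q x Q = 0 := by
  simp [FF_def, add_mul, mul_add, hc.qs, h.qa, h.aq, h.sq, h.qs]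
lemma v21_PxQ (h : C21 P Q x) : FF P x Q = 0 := by
  simp [FF_def, add_mul, mul_add, hc.ps, hc.qs, h.pa, h.ap, h.sp, h.ps, h.aq, h.qs]
lemma v21_xQc (h : C21 P Q x) (c : A) : FF x Q c = 0 := by
  simp [FF_def, add_mul, mul_add, hc.qs, h.aq, h.qs]
lemma v21_PxP (h : C21 P Q x) : FF P x P = x - star x := by
  simp [FF_def, add_mul, mul_add, hc.ps, h.pa, h.ap, h.sp, h.ps]
lemma v21_QxP (h : C21 P Q x) : FF Q x P = x - star x := by
  simp [FF_def, add_mul, mul_add, hc.qs, h.qa, h.aq, h.sq, h.qs, h.ap, h.ps]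
lemma v21_xPP (h : C21 P Q x) : FF x P P = x - star x := by
  simp [FF_def, add_mul, mul_add, hc.ps, h.ap, h.ps, h.sp, h.pa]
lemma v21_mul0 (h1 : C21 P Q x) (h2 : C21 P Q y) : x*y = 0 := by
  rw [← h2.qa, ← mul_assoc, h1.aq, zero_mul]
lemma v21_xyP (h1 : C21 P Q x) (h2 : C21 P Q y) : FF x y P = 0 := by
  have m0 := v21_mul0 hc h1 h2
  have m1 : star y * star x = 0 := by rw [← star_mul, m0, star_zero]
  simp [FF_def, add_mul, mul_add, hc.ps, m0, m1, mul_assoc, h1.sp, h2.ap, mul_mul₀ h1.pa]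

-- C11 values
lemma v11_QxQ (h : C11 P Q x) : FF Q x Q = 0 := by
  simp [FF_def, add_mul, mul_add, hc.qs, h.qa, h.aq, h.sq, h.qs]
lemma v11_QxP (h : C11 P Q x) : FF Q x P = 0 := by
  simp [FF_def, add_mul, mul_add, hc.qs, h.qa, h.aq, h.sq, h.qs]
lemma v11_xQc (h : C11 P Q x) (c : A) : FF x Q c = 0 := by
  simp [FF_def, add_mul, mul_add, hc.qs, h.aq, h.qs]
lemma vQQ_11 (h : C11 P Q x) : FF Q Q x = 0 := by
  simp [FF_def, add_mul, mul_add, hc.qs, hc.qq, add_mul, mul_add, h.qa, h.aq]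

-- C22 values
lemma v22_PxP (h : C22 P Q x) : FF P x P = 0 := by
  simp [FF_def, add_mul, mul_add, hc.ps, h.pa, h.ap, h.sp, h.ps]
lemma v22_PxQ (h : C22 P Q x) : FF P x Q = 0 := by
  simp [FF_def, add_mul, mul_add, hc.ps, hc.qs, h.pa, h.ap, h.sp, h.ps]
lemma v22_QxP (h : C22 P Q x) : FF Q x P = 0 := by
  simp [FF_def, add_mul, mul_add, hc.qs, h.qa, h.aq, h.sq, h.qs, h.ap, h.ps]
lemma v22_xPc (h : C22 P Q x) (c : A) : FF x P c = 0 := by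
  simp [FF_def, add_mul, mul_add, hc.ps, h.ap, h.ps]
lemma vPP_22 (h : C22 P Q x) : FF P P x = 0 := by
  simp [FF_def, add_mul, mul_add, hc.ps, hc.pp, add_mul, mul_add, h.pa, h.ap]

-- mixed projections
lemma vPQQ : FF P Q Q = 0 := by
  simp [FF_def, add_mul, mul_add, hc.ps, hc.qs, hc.pq, hc.qp]
lemma vQPP : FF Q P P = 0 := by
  simp [FF_def, add_mul, mul_add, hc.ps, hc.qs, hc.pq, hc.qp]

-- values against corner test elements
lemma v11_c12 (h : C11 P Q x) (c : A) :
    FF P x (P*(c*Q)) = x*(P*(c*Q)) + x*(P*(c*Q)) := by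
  simp [FF_def, add_mul, mul_add, hc.ps, h.pa, h.ap, h.sp, h.ps, mul_assoc, h.qs, add_mul, mul_add]
lemma v21_c12 (h : C21 P Q x) (c : A) :
    FF P x (P*(c*Q)) = x*(P*(c*Q)) := by
  simp [FF_def, add_mul, mul_add, hc.ps, h.pa, h.ap, h.sp, h.ps, mul_assoc, h.qs, add_mul, mul_add]
lemma v22_c12 (h : C22 P Q x) (c : A) :
    FF Q x (P*(c*Q)) = -(P*(c*star x) + P*(c*star x)) := by
  simp [FF_def, add_mul, mul_add, hc.qs, h.qa, h.aq, h.sq, h.qs, mul_assoc, mul_mul₀ h.ap, add_mul, mul_add]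
lemma v12_c12 (h : C12 P Q x) (c : A) :
    FF Q x (P*(c*Q)) = -(P*(c*star x)) := by
  simp [FF_def, add_mul, mul_add, hc.qs, h.qa, h.aq, h.sq, h.qs, mul_assoc, mul_mul₀ h.ap, add_mul, mul_add]
lemma v22_c21 (h : C22 P Q x) (c : A) :
    FF Q x (Q*(c*P)) = x*(Q*(c*P)) + x*(Q*(c*P)) := by
  simp [FF_def, add_mul, mul_add, hc.qs, h.qa, h.aq, h.sq, h.qs, mul_assoc, h.ps, add_mul, mul_add]

end values

section extraction
variable (hc : Ctx P Q) {T : A}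
include hc

lemma e1a (h : FF P T P = 0) : Q*(T*P) = 0 := by
  have h2 : Q*(FF P T P) = 0 := by rw [h, mul_zero]
  simpa [FF_def, hc.ps, mul_sub, mul_add, add_mul, mul_assoc, hc.pp,
    mul_mul₀ hc.qp, mul_mul₁ hc.pp] using h2

lemma e1b (h : FF P T P = 0) : P*(star T*Q) = 0 := by
  have h2 : (FF P T P)*Q = 0 := by rw [h, zero_mul]
  simpa [FF_def, hc.ps, sub_mul, mul_sub, add_mul, mul_add, mul_assoc, hc.pq,
    mul_mul₀ hc.pq, mul_mul₁ hc.pp] using h2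

lemma e1c (h : FF P T P = 0) :
    P*(T*P) + P*(T*P) - (P*(star T*P) + P*(star T*P)) = 0 := by
  have h2 : P*((FF P T P)*P) = 0 := by rw [h, zero_mul, mul_zero]
  simpa [FF_def, hc.ps, sub_mul, mul_sub, add_mul, mul_add, mul_assoc, hc.pp,
    mul_mul₁ hc.pp] using h2

lemma e2a (h : FF Q T Q = 0) : P*(T*Q) = 0 := by
  have h2 : P*(FF Q T Q) = 0 := by rw [h, mul_zero]
  simpa [FF_def, hc.qs, mul_sub, mul_add, add_mul, mul_assoc, hc.qq,
    mul_mul₀ hc.pq, mul_mul₁ hc.qq] using h2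

lemma e2b (h : FF Q T Q = 0) : Q*(star T*P) = 0 := by
  have h2 : (FF Q T Q)*P = 0 := by rw [h, zero_mul]
  simpa [FF_def, hc.qs, sub_mul, mul_sub, add_mul, mul_add, mul_assoc, hc.qp,
    mul_mul₀ hc.qp, mul_mul₁ hc.qq] using h2

lemma e2c (h : FF Q T Q = 0) :
    Q*(T*Q) + Q*(T*Q) - (Q*(star T*Q) + Q*(star T*Q)) = 0 := by
  have h2 : Q*((FF Q T Q)*Q) = 0 := by rw [h, zero_mul, mul_zero]
  simpa [FF_def, hc.qs, sub_mul, mul_sub, add_mul, mul_add, mul_assoc, hc.qq,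
    mul_mul₁ hc.qq] using h2

end extraction

section annih
variable (hc : Ctx P Q)
variable (hann1 : ∀ X : A, (∀ Y : A, X * Y * P = 0) → X = 0)
variable (hannq : ∀ X : A, (∀ Y : A, X * Y * Q = 0) → X = 0)
include hc hann1 hannq

lemma centP {Z : A} (hcen : ∀ c, Z*c = c*Z) (hzq : Z*Q = 0) : Z = 0 := by
  apply hannq Z
  intro y
  rw [hcen y, mul_assoc, hzq, mul_zero]

lemma centQ {Z : A} (hcen : ∀ c, Z*c = c*Z) (hzp : Z*P = 0) : Z = 0 := by
  apply hann1 Z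
  intro y
  rw [hcen y, mul_assoc, hzp, mul_zero]

lemma cornerA {X : A} (hXQ : X*Q = 0) (h : ∀ c, X*(P*(c*Q)) = 0) : X = 0 := by
  apply hannq X
  intro y
  have hsplit : y*Q = P*(y*Q) + Q*(y*Q) := by
    rw [← add_mul, hc.paddq, one_mul]
  rw [mul_assoc, hsplit, mul_add, h y, zero_add, ← mul_assoc X Q, hXQ, zero_mul]

lemma cornerB {X : A} (hXP : X*P = 0) (h : ∀ c, X*(Q*(c*P)) = 0) : X = 0 := by
  apply hann1 X
  intro y
  have hsplit : y*P = Q*(y*P) + P*(y*P) := by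
    rw [← add_mul, add_comm, hc.paddq, one_mul]
  rw [mul_assoc, hsplit, mul_add, h y, zero_add, ← mul_assoc X P, hXP, zero_mul]

lemma cornerC {Z : A} (h : ∀ c, P*(c*Z) = 0) : Z = 0 := by
  have h2 : ∀ c : A, star Z * c * P = 0 := by
    intro c
    have h3 := congrArg star (h (star c))
    rwa [star_mul, star_mul, star_star, hc.ps, star_zero] at h3
  have := hann1 (star Z) h2
  exact star_eq_zero.mp this

lemma cornerC' {Z : A} (h : ∀ c, Q*(c*Z) = 0) : Z = 0 := by
  have h2 : ∀ c : A, star Z * c * Q = 0 := by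
    intro c
    have h3 := congrArg star (h (star c))
    rwa [star_mul, star_mul, star_star, hc.qs, star_zero] at h3
  have := hannq (star Z) h2
  exact star_eq_zero.mp this

/-- The corner lemma -/
lemma CL {T : A}
    (hE1 : FF P T P = 0) (hE2 : FF Q T Q = 0)
    (hZ1 : ∀ c, FF T P c = 0) (hZ2 : ∀ c, FF T Q c = 0) : T = 0 := by
  have a1 := e1a hc hE1
  have b1 := e1b hc hE1
  have c1 := e1c hc hE1
  have a2 := e2a hc hE2
  have b2 := e2b hc hE2
  have c2 := e2c hc hE2
  have hcen1 : ∀ c, (T*P + P*star T)*c = c*(T*P + P*star T) := by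
    intro c
    have h3 := hZ1 c
    rw [FF_def, hc.ps, add_comm (P*star T) (T*P)] at h3
    exact sub_eq_zero.mp h3
  have hz1q : (T*P + P*star T)*Q = 0 := by
    rw [add_mul, mul_assoc, hc.pq, mul_zero, zero_add, mul_assoc, b1]
  have hZ1z : T*P + P*star T = 0 := centP hc hann1 hannq hcen1 hz1q
  have hA : P*(T*P) + P*(star T*P) = 0 := by
    have h4 := congrArg (fun z => P*(z*P)) hZ1z
    simpa [add_mul, mul_add, mul_assoc, hc.pp, mul_mul₁ hc.pp] using h4
  have hPTP : P*(T*P) = 0 := by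
    have hs : P*(star T*P) = -(P*(T*P)) := eq_neg_of_add_eq_zero_right hA
    apply quarter
    have h5 := c1
    rw [hs] at h5
    calc P*(T*P) + P*(T*P) + P*(T*P) + P*(T*P)
        = P*(T*P) + P*(T*P) - (-(P*(T*P)) + -(P*(T*P))) := by abel
      _ = 0 := h5
  have hcen2 : ∀ c, (T*Q + Q*star T)*c = c*(T*Q + Q*star T) := by
    intro c
    have h3 := hZ2 c
    rw [FF_def, hc.qs, add_comm (Q*star T) (T*Q)] at h3
    exact sub_eq_zero.mp h3
  have hz2p : (T*Q + Q*star T)*P = 0 := by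
    rw [add_mul, mul_assoc, hc.qp, mul_zero, zero_add, mul_assoc, b2]
  have hZ2z : T*Q + Q*star T = 0 := centQ hc hann1 hannq hcen2 hz2p
  have hA2 : Q*(T*Q) + Q*(star T*Q) = 0 := by
    have h4 := congrArg (fun z => Q*(z*Q)) hZ2z
    simpa [add_mul, mul_add, mul_assoc, hc.qq, mul_mul₁ hc.qq] using h4
  have hQTQ : Q*(T*Q) = 0 := by
    have hs : Q*(star T*Q) = -(Q*(T*Q)) := eq_neg_of_add_eq_zero_right hA2
    apply quarter
    have h5 := c2
    rw [hs] at h5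
    calc Q*(T*Q) + Q*(T*Q) + Q*(T*Q) + Q*(T*Q)
        = Q*(T*Q) + Q*(T*Q) - (-(Q*(T*Q)) + -(Q*(T*Q))) := by abel
      _ = 0 := h5
  calc T = P*(T*P) + P*(T*Q) + Q*(T*P) + Q*(T*Q) := hc.decomp T
    _ = 0 := by rw [hPTP, a2, a1, hQTQ]; simp

end annih
end P3



section P4
variable {P Q : A}

lemma FF_zero1 (b c : A) : FF (0:A) b c = 0 := by simp [FF_def]
lemma FF_zero2 (a c : A) : FF a (0:A) c = 0 := by simp [FF_def]

section moreext
variable (hc : Ctx P Q) {T : A}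
include hc

lemma e3 (h : FF P T Q = 0) : P*(T*Q) = 0 := by
  have h2 : P*(FF P T Q) = 0 := by rw [h, mul_zero]
  simpa [FF_def, hc.ps, hc.qs, mul_sub, mul_add, add_mul, mul_assoc, hc.pq,
    mul_mul₀ hc.pq, mul_mul₁ hc.pp] using h2

lemma e4 (h : FF Q T P = 0) : Q*(T*P) = 0 := by
  have h2 : Q*(FF Q T P) = 0 := by rw [h, mul_zero]
  simpa [FF_def, hc.ps, hc.qs, mul_sub, mul_add, add_mul, mul_assoc, hc.qp,
    mul_mul₀ hc.qp, mul_mul₁ hc.qq] using h2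

lemma e5 (h : FF Q Q T = 0) : Q*(T*P) = 0 := by
  have h2 : (FF Q Q T)*P = 0 := by rw [h, zero_mul]
  have h3 : Q*(T*P) + Q*(T*P) = 0 := by
    simpa [FF_def, hc.qs, hc.qq, sub_mul, add_mul, mul_add, mul_assoc, hc.qp] using h2
  exact half _ h3

lemma e6 (h : FF P P T = 0) : P*(T*Q) = 0 := by
  have h2 : (FF P P T)*Q = 0 := by rw [h, zero_mul]
  have h3 : P*(T*Q) + P*(T*Q) = 0 := by
    simpa [FF_def, hc.ps, hc.pp, sub_mul, add_mul, mul_add, mul_assoc, hc.pq] using h2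
  exact half _ h3

end moreext

section halfcl
variable (hc : Ctx P Q)
variable (hann1 : ∀ X : A, (∀ Y : A, X * Y * P = 0) → X = 0)
variable (hannq : ∀ X : A, (∀ Y : A, X * Y * Q = 0) → X = 0)
include hc hann1 hannq

lemma halfCL_P {T : A} (hE1 : FF P T P = 0) (hZ1 : ∀ c, FF T P c = 0) : P*(T*P) = 0 := by
  have b1 := e1b hc hE1
  have c1 := e1c hc hE1
  have hcen1 : ∀ c, (T*P + P*star T)*c = c*(T*P + P*star T) := by
    intro c
    have h3 := hZ1 c
    rw [FF_def, hc.ps, add_comm (P*star T) (T*P)] at h3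
    exact sub_eq_zero.mp h3
  have hz1q : (T*P + P*star T)*Q = 0 := by
    rw [add_mul, mul_assoc, hc.pq, mul_zero, zero_add, mul_assoc, b1]
  have hZ1z : T*P + P*star T = 0 := centP hc hann1 hannq hcen1 hz1q
  have hA : P*(T*P) + P*(star T*P) = 0 := by
    have h4 := congrArg (fun z => P*(z*P)) hZ1z
    simpa [add_mul, mul_add, mul_assoc, hc.pp, mul_mul₁ hc.pp] using h4
  have hs : P*(star T*P) = -(P*(T*P)) := eq_neg_of_add_eq_zero_right hA
  apply quarter
  have h5 := c1
  rw [hs] at h5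
  calc P*(T*P) + P*(T*P) + P*(T*P) + P*(T*P)
      = P*(T*P) + P*(T*P) - (-(P*(T*P)) + -(P*(T*P))) := by abel
    _ = 0 := h5

lemma halfCL_Q {T : A} (hE2 : FF Q T Q = 0) (hZ2 : ∀ c, FF T Q c = 0) : Q*(T*Q) = 0 := by
  have b2 := e2b hc hE2
  have c2 := e2c hc hE2
  have hcen2 : ∀ c, (T*Q + Q*star T)*c = c*(T*Q + Q*star T) := by
    intro c
    have h3 := hZ2 c
    rw [FF_def, hc.qs, add_comm (Q*star T) (T*Q)] at h3
    exact sub_eq_zero.mp h3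
  have hz2p : (T*Q + Q*star T)*P = 0 := by
    rw [add_mul, mul_assoc, hc.qp, mul_zero, zero_add, mul_assoc, b2]
  have hZ2z : T*Q + Q*star T = 0 := centQ hc hann1 hannq hcen2 hz2p
  have hA2 : Q*(T*Q) + Q*(star T*Q) = 0 := by
    have h4 := congrArg (fun z => Q*(z*Q)) hZ2z
    simpa [add_mul, mul_add, mul_assoc, hc.qq, mul_mul₁ hc.qq] using h4
  have hs : Q*(star T*Q) = -(Q*(T*Q)) := eq_neg_of_add_eq_zero_right hA2
  apply quarter
  have h5 := c2
  rw [hs] at h5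
  calc Q*(T*Q) + Q*(T*Q) + Q*(T*Q) + Q*(T*Q)
      = Q*(T*Q) + Q*(T*Q) - (-(Q*(T*Q)) + -(Q*(T*Q))) := by abel
    _ = 0 := h5

/-- CL restated through the two half lemmas -/
lemma CL' {T : A}
    (hE1 : FF P T P = 0) (hE2 : FF Q T Q = 0)
    (hZ1 : ∀ c, FF T P c = 0) (hZ2 : ∀ c, FF T Q c = 0) : T = 0 := by
  have hPTP := halfCL_P hc hann1 hannq hE1 hZ1
  have hQTQ := halfCL_Q hc hann1 hannq hE2 hZ2
  have a1 := e1a hc hE1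
  have a2 := e2a hc hE2
  calc T = P*(T*P) + P*(T*Q) + Q*(T*P) + Q*(T*Q) := hc.decomp T
    _ = 0 := by rw [hPTP, a2, a1, hQTQ]; simp

end halfcl

section claims
variable (hc : Ctx P Q)
variable (hann1 : ∀ X : A, (∀ Y : A, X * Y * P = 0) → X = 0)
variable (hannq : ∀ X : A, (∀ Y : A, X * Y * Q = 0) → X = 0)
variable (Φ : A → A)
variable (hf : ∀ a b c, Φ (FF a b c) = FF (Φ a) b c + FF a (Φ b) c + FF a b (Φ c))
include hc hann1 hannq hf

lemma claimC3a {x y : A} (hx : C11 P Q x) (hy : C12 P Q y) : Φ (x + y) = Φ x + Φ y := by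
  have hE1 : FF P (Φ (x+y) - Φ x - Φ y) P = 0 := master2z Φ hf (v12_PxP hc hy)
  have hE2 : FF Q (Φ (x+y) - Φ x - Φ y) Q = 0 := master2z' Φ hf (v11_QxQ hc hx)
  have hZ1 : ∀ c, FF (Φ (x+y) - Φ x - Φ y) P c = 0 := fun c => master1z Φ hf (v12_xPc hc hy c)
  have hZ2 : ∀ c, FF (Φ (x+y) - Φ x - Φ y) Q c = 0 := fun c => master1z' Φ hf (v11_xQc hc hx c)
  have hT := CL' hc hann1 hannq hE1 hE2 hZ1 hZ2
  rw [sub_sub] at hT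
  exact sub_eq_zero.mp hT

lemma claimC2 {x y : A} (hx : C12 P Q x) (hy : C21 P Q y) : Φ (x + y) = Φ x + Φ y := by
  have hE1 : FF P (Φ (x+y) - Φ x - Φ y) P = 0 := master2z' Φ hf (v12_PxP hc hx)
  have hE2 : FF Q (Φ (x+y) - Φ x - Φ y) Q = 0 := master2z Φ hf (v21_QxQ hc hy)
  have hZ1 : ∀ c, FF (Φ (x+y) - Φ x - Φ y) P c = 0 := fun c => master1z' Φ hf (v12_xPc hc hx c)
  have hZ2 : ∀ c, FF (Φ (x+y) - Φ x - Φ y) Q c = 0 := fun c => master1z Φ hf (v21_xQc hc hy c)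
  have hT := CL' hc hann1 hannq hE1 hE2 hZ1 hZ2
  rw [sub_sub] at hT
  exact sub_eq_zero.mp hT

lemma claimC3f {x y : A} (hx : C22 P Q x) (hy : C21 P Q y) : Φ (x + y) = Φ x + Φ y := by
  have hE1 : FF P (Φ (x+y) - Φ x - Φ y) P = 0 := master2z' Φ hf (v22_PxP hc hx)
  have hE2 : FF Q (Φ (x+y) - Φ x - Φ y) Q = 0 := master2z Φ hf (v21_QxQ hc hy)
  have hZ1 : ∀ c, FF (Φ (x+y) - Φ x - Φ y) P c = 0 := fun c => master1z' Φ hf (v22_xPc hc hx c)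
  have hZ2 : ∀ c, FF (Φ (x+y) - Φ x - Φ y) Q c = 0 := fun c => master1z Φ hf (v21_xQc hc hy c)
  have hT := CL' hc hann1 hannq hE1 hE2 hZ1 hZ2
  rw [sub_sub] at hT
  exact sub_eq_zero.mp hT

lemma claimC3c {x y : A} (hx : C22 P Q x) (hy : C12 P Q y)
    (h3a : ∀ u v : A, C11 P Q u → C12 P Q v → Φ (u + v) = Φ u + Φ v) :
    Φ (x + y) = Φ x + Φ y := by
  set T := Φ (x+y) - Φ x - Φ y with hTdef
  have hE1 : FF P T P = 0 := master2zz Φ hf (v22_PxP hc hx) (v12_PxP hc hy)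
  have hPTQf : FF P T Q = 0 := master2z' Φ hf (v22_PxQ hc hx)
  have hZ1 : ∀ c, FF T P c = 0 := fun c => master1zz Φ hf (v22_xPc hc hx c) (v12_xPc hc hy c)
  have hPTP : P*(T*P) = 0 := halfCL_P hc hann1 hannq hE1 hZ1
  have hQTP : Q*(T*P) = 0 := e1a hc hE1
  have hPTQ : P*(T*Q) = 0 := e3 hc hPTQf
  have hTT : T = Q*(T*Q) := by
    calc T = P*(T*P) + P*(T*Q) + Q*(T*P) + Q*(T*Q) := hc.decomp T
      _ = Q*(T*Q) := by rw [hPTP, hPTQ, hQTP]; simp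
  have hFQTc : ∀ c, FF Q T (P*(c*Q)) = 0 := by
    intro c
    apply master2split Φ hf
    rw [FF_add2, v22_c12 hc hx c, v12_c12 hc hy c, add_comm]
    have k1 : C11 P Q (-(P*(c*star y))) := by
      apply mk11 hc
      · simp [mul_neg, mul_mul₁ hc.pp]
      · simp [neg_mul, mul_assoc, hy.sp]
    have k2 : C12 P Q (-(P*(c*star x) + P*(c*star x))) := by
      apply mk12 hc
      · simp [mul_add, mul_neg, mul_mul₁ hc.pp]
      · simp [add_mul, neg_mul, mul_assoc, hx.sp]
    exact (h3a _ _ k1 k2).trans (add_comm _ _)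
  have hkey : ∀ c, P*(c*(Q*(star T*Q))) = 0 := by
    intro c
    have h9 := hFQTc c
    rw [hTT] at h9
    simp only [FF_def, hc.qs, hc.qq, star_mul, star_star, mul_assoc, add_mul, mul_add,
      mul_mul₁ hc.qq, mul_mul₀ hc.qp, mul_zero, zero_mul, add_zero, zero_add, zero_sub,
      neg_eq_zero] at h9
    exact half _ h9
  have hz : Q*(star T*Q) = 0 := cornerC hc hann1 hannq hkey
  have hz2 : Q*(T*Q) = 0 := by
    have h10 := congrArg star hz
    rwa [star_mul, star_mul, star_star, hc.qs, star_zero, mul_assoc] at h10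
  have hT0 : T = 0 := by rw [hTT, hz2]
  rw [hTdef, sub_sub] at hT0
  exact sub_eq_zero.mp hT0

lemma claimC3b {x y : A} (hx : C11 P Q x) (hy : C21 P Q y)
    (h3c : ∀ u v : A, C22 P Q u → C12 P Q v → Φ (u + v) = Φ u + Φ v) :
    Φ (x + y) = Φ x + Φ y := by
  set T := Φ (x+y) - Φ x - Φ y with hTdef
  have hE2 : FF Q T Q = 0 := master2zz Φ hf (v11_QxQ hc hx) (v21_QxQ hc hy)
  have hQTPf : FF Q T P = 0 := master2z' Φ hf (v11_QxP hc hx)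
  have hZ2 : ∀ c, FF T Q c = 0 := fun c => master1zz Φ hf (v11_xQc hc hx c) (v21_xQc hc hy c)
  have hQTQ : Q*(T*Q) = 0 := halfCL_Q hc hann1 hannq hE2 hZ2
  have hPTQ : P*(T*Q) = 0 := e2a hc hE2
  have hQTP : Q*(T*P) = 0 := e4 hc hQTPf
  have hTT : T = P*(T*P) := by
    calc T = P*(T*P) + P*(T*Q) + Q*(T*P) + Q*(T*Q) := hc.decomp T
      _ = P*(T*P) := by rw [hQTQ, hPTQ, hQTP]; simp
  have hFPTc : ∀ c, FF P T (P*(c*Q)) = 0 := by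
    intro c
    apply master2split Φ hf
    rw [FF_add2, v11_c12 hc hx c, v21_c12 hc hy c, add_comm]
    have k1 : C22 P Q (y*(P*(c*Q))) := by
      apply mk22 hc
      · rw [← mul_assoc, hy.pa, zero_mul]
      · simp [mul_assoc, hc.qp]
    have k2 : C12 P Q (x*(P*(c*Q)) + x*(P*(c*Q))) := by
      apply mk12 hc
      · simp [mul_add, ← mul_assoc, hx.pa]
      · simp [add_mul, mul_assoc, hc.qp]
    exact (h3c _ _ k1 k2).trans (add_comm _ _)
  have hkey : ∀ c, T*(P*(c*Q)) = 0 := by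
    intro c
    have h9 := hFPTc c
    rw [hTT] at h9
    simp only [FF_def, hc.ps, hc.pp, star_mul, star_star, mul_assoc, add_mul, mul_add,
      mul_mul₁ hc.pp, mul_mul₀ hc.qp, mul_zero, zero_mul, add_zero, zero_add, sub_zero] at h9
    have h10 := half _ h9
    calc T*(P*(c*Q)) = (P*(T*P))*(P*(c*Q)) := by rw [← hTT]
      _ = P*(T*(P*(c*Q))) := by simp [mul_assoc, mul_mul₁ hc.pp]
      _ = 0 := h10
  have hTQ : T*Q = 0 := by
    calc T*Q = (P*(T*P))*Q := by rw [← hTT]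
      _ = 0 := by simp [mul_assoc, hc.pq]
  have hT0 : T = 0 := cornerA hc hann1 hannq hTQ hkey
  rw [hTdef, sub_sub] at hT0
  exact sub_eq_zero.mp hT0

lemma claimA {a b c d : A} (ha : C11 P Q a) (hb : C12 P Q b) (hcc : C21 P Q c) (hd : C22 P Q d)
    (h3b : ∀ u v : A, C11 P Q u → C21 P Q v → Φ (u + v) = Φ u + Φ v)
    (h3c : ∀ u v : A, C22 P Q u → C12 P Q v → Φ (u + v) = Φ u + Φ v) :
    Φ (a + b + c + d) = Φ a + Φ b + Φ c + Φ d := by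
  have hre : a + b + c + d = (a+c) + (b+d) := by abel
  have hE1 : FF P (Φ ((a+c)+(b+d)) - Φ (a+c) - Φ (b+d)) P = 0 := by
    apply master2z Φ hf
    rw [FF_add2, v12_PxP hc hb, v22_PxP hc hd, add_zero]
  have hE2 : FF Q (Φ ((a+c)+(b+d)) - Φ (a+c) - Φ (b+d)) Q = 0 := by
    apply master2z' Φ hf
    rw [FF_add2, v11_QxQ hc ha, v21_QxQ hc hcc, add_zero]
  have hZ1 : ∀ c', FF (Φ ((a+c)+(b+d)) - Φ (a+c) - Φ (b+d)) P c' = 0 := by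
    intro c'
    apply master1z Φ hf
    rw [FF_add1, v12_xPc hc hb c', v22_xPc hc hd c', add_zero]
  have hZ2 : ∀ c', FF (Φ ((a+c)+(b+d)) - Φ (a+c) - Φ (b+d)) Q c' = 0 := by
    intro c'
    apply master1z' Φ hf
    rw [FF_add1, v11_xQc hc ha c', v21_xQc hc hcc c', add_zero]
  have hT := CL' hc hann1 hannq hE1 hE2 hZ1 hZ2
  rw [sub_sub] at hT
  have hsplit := sub_eq_zero.mp hT
  have h1 : Φ (a+c) = Φ a + Φ c := h3b a c ha hcc
  have h2 : Φ (b+d) = Φ d + Φ b := by rw [add_comm b d]; exact h3c d b hd hb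
  calc Φ (a + b + c + d) = Φ ((a+c) + (b+d)) := by rw [hre]
    _ = Φ (a+c) + Φ (b+d) := hsplit
    _ = (Φ a + Φ c) + (Φ d + Φ b) := by rw [h1, h2]
    _ = Φ a + Φ b + Φ c + Φ d := by abel

lemma claimA12 {x y : A} (hx : C12 P Q x) (hy : C12 P Q y)
    (hC2 : ∀ u v : A, C12 P Q u → C21 P Q v → Φ (u + v) = Φ u + Φ v)
    (h3a : ∀ u v : A, C11 P Q u → C12 P Q v → Φ (u + v) = Φ u + Φ v)
    (h3c : ∀ u v : A, C22 P Q u → C12 P Q v → Φ (u + v) = Φ u + Φ v) :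
    Φ (x + y) = Φ x + Φ y := by
  have hu : C21 P Q (-star x) := hx.negstar
  have hv : C21 P Q (-star y) := hy.negstar
  -- free relations for T
  have hE1 : FF P (Φ (x+y) - Φ x - Φ y) P = 0 :=
    master2zz Φ hf (v12_PxP hc hx) (v12_PxP hc hy)
  have hZ1 : ∀ c, FF (Φ (x+y) - Φ x - Φ y) P c = 0 :=
    fun c => master1zz Φ hf (v12_xPc hc hx c) (v12_xPc hc hy c)
  have hPTP : P*((Φ (x+y) - Φ x - Φ y)*P) = 0 := halfCL_P hc hann1 hannq hE1 hZ1
  -- free relations for S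
  have hE2S : FF Q (Φ (-star x + -star y) - Φ (-star x) - Φ (-star y)) Q = 0 :=
    master2zz Φ hf (v21_QxQ hc hu) (v21_QxQ hc hv)
  have hZ2S : ∀ c, FF (Φ (-star x + -star y) - Φ (-star x) - Φ (-star y)) Q c = 0 :=
    fun c => master1zz Φ hf (v21_xQc hc hu c) (v21_xQc hc hv c)
  have hQSQ : Q*((Φ (-star x + -star y) - Φ (-star x) - Φ (-star y))*Q) = 0 :=
    halfCL_Q hc hann1 hannq hE2S hZ2S
  have hPSQ : P*((Φ (-star x + -star y) - Φ (-star x) - Φ (-star y))*Q) = 0 := e2a hc hE2S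
  -- big identity
  have hU : Φ (P + x) = Φ P + Φ x := h3a P x (mk11 hc hc.pp hc.pp) hx
  have hV : Φ (Q + y) = Φ Q + Φ y := h3c Q y (mk22 hc hc.pq hc.qp) hy
  have hU0 : Φ (P + x) - Φ P - Φ x = 0 := by rw [hU]; abel
  have hV0 : Φ (Q + y) - Φ Q - Φ y = 0 := by rw [hV]; abel
  have vbig : FF (P+x) (Q+y) Q = (x+y) - star (x+y) := by
    rw [FF_add1, FF_add2, FF_add2, vPQQ hc, v12_PxQ hc hy, v12_xQQ hc hx, v12_xyQ hc hx hy,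
      star_add]
    abel
  have h1 : Φ (FF (P+x) (Q+y) Q) - Φ (FF P (Q+y) Q) - Φ (FF x (Q+y) Q) = 0 := by
    rw [← master1eq Φ hf, hU0, FF_zero1]
  have h2' : Φ (FF P (Q+y) Q) = Φ (y - star y) := by
    have h2a : Φ (FF P (Q+y) Q) - Φ (FF P Q Q) - Φ (FF P y Q) = 0 := by
      rw [← master2eq Φ hf, hV0, FF_zero2]
    rw [vPQQ hc, phi_zero Φ hf, sub_zero, v12_PxQ hc hy] at h2a
    exact sub_eq_zero.mp h2a
  have h3' : Φ (FF x (Q+y) Q) = Φ (x - star x) := by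
    have h3a' : Φ (FF x (Q+y) Q) - Φ (FF x Q Q) - Φ (FF x y Q) = 0 := by
      rw [← master2eq Φ hf, hV0, FF_zero2]
    rw [v12_xyQ hc hx hy, phi_zero Φ hf, sub_zero, v12_xQQ hc hx] at h3a'
    exact sub_eq_zero.mp h3a'
  have hBig : Φ ((x+y) - star (x+y)) = Φ (y - star y) + Φ (x - star x) := by
    have h4 := h1
    rw [vbig, h2', h3'] at h4
    rw [sub_sub] at h4
    exact sub_eq_zero.mp h4
  -- R2 : F P S P = 0
  have key1 : (-star x + -star y) - star (-star x + -star y) = (x+y) - star (x+y) := by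
    rw [star_add, star_neg, star_neg, star_star, star_star, star_add]
    abel
  have key2 : (-star x) - star (-star x) = x - star x := by
    rw [star_neg, star_star]; abel
  have key3 : (-star y) - star (-star y) = y - star y := by
    rw [star_neg, star_star]; abel
  have hR2 : FF P (Φ (-star x + -star y) - Φ (-star x) - Φ (-star y)) P = 0 := by
    rw [master2eq Φ hf, v21_PxP hc (hu.add hv), v21_PxP hc hu, v21_PxP hc hv,
      key1, key2, key3, hBig]
    abel
  have hQSP : Q*((Φ (-star x + -star y) - Φ (-star x) - Φ (-star y))*P) = 0 := e1a hc hR2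
  -- S = P*(S*P)
  have hSP : (Φ (-star x + -star y) - Φ (-star x) - Φ (-star y))
      = P*((Φ (-star x + -star y) - Φ (-star x) - Φ (-star y))*P) := by
    calc (Φ (-star x + -star y) - Φ (-star x) - Φ (-star y))
        = P*((Φ (-star x + -star y) - Φ (-star x) - Φ (-star y))*P)
          + P*((Φ (-star x + -star y) - Φ (-star x) - Φ (-star y))*Q)
          + Q*((Φ (-star x + -star y) - Φ (-star x) - Φ (-star y))*P)
          + Q*((Φ (-star x + -star y) - Φ (-star x) - Φ (-star y))*Q) := hc.decomp _
      _ = P*((Φ (-star x + -star y) - Φ (-star x) - Φ (-star y))*P) := by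
          rw [hPSQ, hQSP, hQSQ]; simp
  -- T + S = 0 via C2
  have hm : C12 P Q (x+y) := hx.add hy
  have hC2m : Φ ((x+y) + -star (x+y)) = Φ (x+y) + Φ (-star (x+y)) := hC2 _ _ hm hm.negstar
  have hC2x : Φ (x + -star x) = Φ x + Φ (-star x) := hC2 _ _ hx hx.negstar
  have hC2y : Φ (y + -star y) = Φ y + Φ (-star y) := hC2 _ _ hy hy.negstar
  have estar : -star (x+y) = -star x + -star y := by rw [star_add]; abel
  have hBig' : Φ (x+y) + Φ (-star x + -star y)
      = (Φ y + Φ (-star y)) + (Φ x + Φ (-star x)) := by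
    have h5 := hBig
    rw [sub_eq_add_neg ((x+y):A), sub_eq_add_neg x, sub_eq_add_neg y, hC2m, hC2x, hC2y,
      estar] at h5
    exact h5
  have hTS : (Φ (x+y) - Φ x - Φ y) + (Φ (-star x + -star y) - Φ (-star x) - Φ (-star y)) = 0 := by
    calc (Φ (x+y) - Φ x - Φ y) + (Φ (-star x + -star y) - Φ (-star x) - Φ (-star y))
        = (Φ (x+y) + Φ (-star x + -star y)) - ((Φ y + Φ (-star y)) + (Φ x + Φ (-star x))) := by
          abel
      _ = 0 := by rw [hBig', sub_self]
  -- conclude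
  have hS : (Φ (-star x + -star y) - Φ (-star x) - Φ (-star y)) = -(Φ (x+y) - Φ x - Φ y) := by
    have := hTS
    rw [add_comm] at this
    exact eq_neg_of_add_eq_zero_left this
  have hT0 : Φ (x+y) - Φ x - Φ y = 0 := by
    have h6 := hSP
    rw [hS] at h6
    have h7 : Φ (x+y) - Φ x - Φ y = P*((Φ (x+y) - Φ x - Φ y)*P) := by
      have h8 := congrArg (fun z => -z) h6
      simpa only [neg_mul, mul_neg, neg_neg] using h8
    rw [h7, hPTP]
  rw [sub_sub] at hT0
  exact sub_eq_zero.mp hT0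

lemma claimA21 {x y : A} (hx : C21 P Q x) (hy : C21 P Q y)
    (hC2 : ∀ u v : A, C12 P Q u → C21 P Q v → Φ (u + v) = Φ u + Φ v)
    (h3f : ∀ u v : A, C22 P Q u → C21 P Q v → Φ (u + v) = Φ u + Φ v)
    (h3b : ∀ u v : A, C11 P Q u → C21 P Q v → Φ (u + v) = Φ u + Φ v)
    (hA12 : ∀ u v : A, C12 P Q u → C12 P Q v → Φ (u + v) = Φ u + Φ v) :
    Φ (x + y) = Φ x + Φ y := by
  have hU : Φ (Q + x) = Φ Q + Φ x := h3f Q x (mk22 hc hc.pq hc.qp) hx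
  have hV : Φ (P + y) = Φ P + Φ y := h3b P y (mk11 hc hc.pp hc.pp) hy
  have hU0 : Φ (Q + x) - Φ Q - Φ x = 0 := by rw [hU]; abel
  have hV0 : Φ (P + y) - Φ P - Φ y = 0 := by rw [hV]; abel
  have vbig : FF (Q+x) (P+y) P = (x+y) - star (x+y) := by
    rw [FF_add1, FF_add2, FF_add2, vQPP hc, v21_QxP hc hy, v21_xPP hc hx, v21_xyP hc hx hy,
      star_add]
    abel
  have h1 : Φ (FF (Q+x) (P+y) P) - Φ (FF Q (P+y) P) - Φ (FF x (P+y) P) = 0 := by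
    rw [← master1eq Φ hf, hU0, FF_zero1]
  have h2' : Φ (FF Q (P+y) P) = Φ (y - star y) := by
    have h2a : Φ (FF Q (P+y) P) - Φ (FF Q P P) - Φ (FF Q y P) = 0 := by
      rw [← master2eq Φ hf, hV0, FF_zero2]
    rw [vQPP hc, phi_zero Φ hf, sub_zero, v21_QxP hc hy] at h2a
    exact sub_eq_zero.mp h2a
  have h3' : Φ (FF x (P+y) P) = Φ (x - star x) := by
    have h3a' : Φ (FF x (P+y) P) - Φ (FF x P P) - Φ (FF x y P) = 0 := by
      rw [← master2eq Φ hf, hV0, FF_zero2]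
    rw [v21_xyP hc hx hy, phi_zero Φ hf, sub_zero, v21_xPP hc hx] at h3a'
    exact sub_eq_zero.mp h3a'
  have hBig : Φ ((x+y) - star (x+y)) = Φ (y - star y) + Φ (x - star x) := by
    have h4 := h1
    rw [vbig, h2', h3'] at h4
    rw [sub_sub] at h4
    exact sub_eq_zero.mp h4
  -- use C2 (reversed order) and A12
  have hm : C21 P Q (x+y) := hx.add hy
  have hC2m : Φ (-star (x+y) + (x+y)) = Φ (-star (x+y)) + Φ (x+y) := hC2 _ _ hm.negstar hm
  have hC2x : Φ (-star x + x) = Φ (-star x) + Φ x := hC2 _ _ hx.negstar hx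
  have hC2y : Φ (-star y + y) = Φ (-star y) + Φ y := hC2 _ _ hy.negstar hy
  have estar : -star (x+y) = -star x + -star y := by rw [star_add]; abel
  have hsplitneg : Φ (-star x + -star y) = Φ (-star x) + Φ (-star y) :=
    hA12 _ _ hx.negstar hy.negstar
  have hBig' : Φ (-star x) + Φ (-star y) + Φ (x+y)
      = (Φ (-star y) + Φ y) + (Φ (-star x) + Φ x) := by
    have h5 := hBig
    rw [sub_eq_neg_add ((x+y):A), sub_eq_neg_add x, sub_eq_neg_add y, hC2m, hC2x, hC2y,
      estar, hsplitneg] at h5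
    exact h5
  have h6 : Φ (-star x) + Φ (-star y) + Φ (x+y)
      = Φ (-star x) + Φ (-star y) + (Φ x + Φ y) := by
    rw [hBig']; abel
  exact add_left_cancel h6

lemma claimA11 {x y : A} (hx : C11 P Q x) (hy : C11 P Q y)
    (hA12 : ∀ u v : A, C12 P Q u → C12 P Q v → Φ (u + v) = Φ u + Φ v) :
    Φ (x + y) = Φ x + Φ y := by
  set T := Φ (x+y) - Φ x - Φ y with hTdef
  have hE2 : FF Q T Q = 0 := master2zz Φ hf (v11_QxQ hc hx) (v11_QxQ hc hy)
  have hZ2 : ∀ c, FF T Q c = 0 := fun c => master1zz Φ hf (v11_xQc hc hx c) (v11_xQc hc hy c)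
  have hQTQ : Q*(T*Q) = 0 := halfCL_Q hc hann1 hannq hE2 hZ2
  have hPTQ : P*(T*Q) = 0 := e2a hc hE2
  have hS3 : FF Q Q T = 0 := master3zz Φ hf (vQQ_11 hc hx) (vQQ_11 hc hy)
  have hQTP : Q*(T*P) = 0 := e5 hc hS3
  have hTT : T = P*(T*P) := by
    calc T = P*(T*P) + P*(T*Q) + Q*(T*P) + Q*(T*Q) := hc.decomp T
      _ = P*(T*P) := by rw [hQTQ, hPTQ, hQTP]; simp
  have hFPTc : ∀ c, FF P T (P*(c*Q)) = 0 := by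
    intro c
    apply master2split Φ hf
    rw [FF_add2, v11_c12 hc hx c, v11_c12 hc hy c]
    have k1 : C12 P Q (x*(P*(c*Q)) + x*(P*(c*Q))) := by
      apply mk12 hc
      · simp [mul_add, ← mul_assoc, hx.pa]
      · simp [add_mul, mul_assoc, hc.qp]
    have k2 : C12 P Q (y*(P*(c*Q)) + y*(P*(c*Q))) := by
      apply mk12 hc
      · simp [mul_add, ← mul_assoc, hy.pa]
      · simp [add_mul, mul_assoc, hc.qp]
    exact hA12 _ _ k1 k2
  have hkey : ∀ c, T*(P*(c*Q)) = 0 := by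
    intro c
    have h9 := hFPTc c
    rw [hTT] at h9
    simp only [FF_def, hc.ps, hc.pp, star_mul, star_star, mul_assoc, add_mul, mul_add,
      mul_mul₁ hc.pp, mul_mul₀ hc.qp, mul_zero, zero_mul, add_zero, zero_add, sub_zero] at h9
    have h10 := half _ h9
    calc T*(P*(c*Q)) = (P*(T*P))*(P*(c*Q)) := by rw [← hTT]
      _ = P*(T*(P*(c*Q))) := by simp [mul_assoc, mul_mul₁ hc.pp]
      _ = 0 := h10
  have hTQ : T*Q = 0 := by
    calc T*Q = (P*(T*P))*Q := by rw [← hTT]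
      _ = 0 := by simp [mul_assoc, hc.pq]
  have hT0 : T = 0 := cornerA hc hann1 hannq hTQ hkey
  rw [hTdef, sub_sub] at hT0
  exact sub_eq_zero.mp hT0

lemma claimA22 {x y : A} (hx : C22 P Q x) (hy : C22 P Q y)
    (hA21 : ∀ u v : A, C21 P Q u → C21 P Q v → Φ (u + v) = Φ u + Φ v) :
    Φ (x + y) = Φ x + Φ y := by
  set T := Φ (x+y) - Φ x - Φ y with hTdef
  have hE1 : FF P T P = 0 := master2zz Φ hf (v22_PxP hc hx) (v22_PxP hc hy)
  have hZ1 : ∀ c, FF T P c = 0 := fun c => master1zz Φ hf (v22_xPc hc hx c) (v22_xPc hc hy c)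
  have hPTP : P*(T*P) = 0 := halfCL_P hc hann1 hannq hE1 hZ1
  have hQTP : Q*(T*P) = 0 := e1a hc hE1
  have hS3 : FF P P T = 0 := master3zz Φ hf (vPP_22 hc hx) (vPP_22 hc hy)
  have hPTQ : P*(T*Q) = 0 := e6 hc hS3
  have hTT : T = Q*(T*Q) := by
    calc T = P*(T*P) + P*(T*Q) + Q*(T*P) + Q*(T*Q) := hc.decomp T
      _ = Q*(T*Q) := by rw [hPTP, hPTQ, hQTP]; simp
  have hFQTc : ∀ c, FF Q T (Q*(c*P)) = 0 := by
    intro c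
    apply master2split Φ hf
    rw [FF_add2, v22_c21 hc hx c, v22_c21 hc hy c]
    have k1 : C21 P Q (x*(Q*(c*P)) + x*(Q*(c*P))) := by
      apply mk21 hc
      · simp [mul_add, ← mul_assoc, hx.pa]
      · simp [add_mul, mul_assoc, hc.pp]
    have k2 : C21 P Q (y*(Q*(c*P)) + y*(Q*(c*P))) := by
      apply mk21 hc
      · simp [mul_add, ← mul_assoc, hy.pa]
      · simp [add_mul, mul_assoc, hc.pp]
    exact hA21 _ _ k1 k2
  have hkey : ∀ c, T*(Q*(c*P)) = 0 := by
    intro c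
    have h9 := hFQTc c
    rw [hTT] at h9
    simp only [FF_def, hc.qs, hc.qq, star_mul, star_star, mul_assoc, add_mul, mul_add,
      mul_mul₁ hc.qq, mul_mul₀ hc.pq, mul_zero, zero_mul, add_zero, zero_add, sub_zero] at h9
    have h10 := half _ h9
    calc T*(Q*(c*P)) = (Q*(T*Q))*(Q*(c*P)) := by rw [← hTT]
      _ = Q*(T*(Q*(c*P))) := by simp [mul_assoc, mul_mul₁ hc.qq]
      _ = 0 := h10
  have hTP : T*P = 0 := by
    calc T*P = (Q*(T*Q))*P := by rw [← hTT]
      _ = 0 := by simp [mul_assoc, hc.qp]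
  have hT0 : T = 0 := cornerB hc hann1 hannq hTP hkey
  rw [hTdef, sub_sub] at hT0
  exact sub_eq_zero.mp hT0

end claims
end P4

end Stmt3Aux
theorem stmt3 {A : Type*} [Ring A] [StarRing A] [Algebra ℂ A]
    (P : A) (hPstar : star P = P) (hPidem : P * P = P) (hP0 : P ≠ 0) (hP1 : P ≠ 1)
    (hann1 : ∀ X : A, (∀ Y : A, X * Y * P = 0) → X = 0)
    (hann2 : ∀ X : A, (∀ Y : A, X * Y * (1 - P) = 0) → X = 0)
    (Φ : A → A)
    (hΦ : ∀ a b c : A, Φ (skw (jord a b) c) =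
      skw (jord (Φ a) b) c + skw (jord a (Φ b)) c + skw (jord a b) (Φ c)) :
    ∀ a b : A, Φ (a + b) = Φ a + Φ b := by
  open Stmt3Aux in
  intro x y
  have hc : Stmt3Aux.Ctx P (1-P) := ⟨hPstar, hPidem, rfl⟩
  have hf : ∀ a b c : A, Φ (Stmt3Aux.FF a b c)
      = Stmt3Aux.FF (Φ a) b c + Stmt3Aux.FF a (Φ b) c + Stmt3Aux.FF a b (Φ c) := by
    intro a b c
    have h := hΦ a b c
    rwa [Stmt3Aux.skw_jord, Stmt3Aux.skw_jord, Stmt3Aux.skw_jord, Stmt3Aux.skw_jord] at h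
  -- corner membership of Peirce components
  have m11 : ∀ z : A, Stmt3Aux.C11 P (1-P) (P*(z*P)) := fun z =>
    Stmt3Aux.mk11 hc (by rw [← mul_assoc, hPidem]) (by rw [mul_assoc, mul_assoc, hPidem])
  have m12 : ∀ z : A, Stmt3Aux.C12 P (1-P) (P*(z*(1-P))) := fun z =>
    Stmt3Aux.mk12 hc (by rw [← mul_assoc, hPidem])
      (by rw [mul_assoc, mul_assoc, hc.qp, mul_zero, mul_zero])
  have m21 : ∀ z : A, Stmt3Aux.C21 P (1-P) ((1-P)*(z*P)) := fun z =>
    Stmt3Aux.mk21 hc (by rw [← mul_assoc, hc.pq, zero_mul])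
      (by rw [mul_assoc, mul_assoc, hPidem])
  have m22 : ∀ z : A, Stmt3Aux.C22 P (1-P) ((1-P)*(z*(1-P))) := fun z =>
    Stmt3Aux.mk22 hc (by rw [← mul_assoc, hc.pq, zero_mul])
      (by rw [mul_assoc, mul_assoc, hc.qp, mul_zero, mul_zero])
  -- the claims
  have A3a : ∀ u v : A, Stmt3Aux.C11 P (1-P) u → Stmt3Aux.C12 P (1-P) v →
      Φ (u+v) = Φ u + Φ v := fun u v hu hv => Stmt3Aux.claimC3a hc hann1 hann2 Φ hf hu hv
  have A2 : ∀ u v : A, Stmt3Aux.C12 P (1-P) u → Stmt3Aux.C21 P (1-P) v →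
      Φ (u+v) = Φ u + Φ v := fun u v hu hv => Stmt3Aux.claimC2 hc hann1 hann2 Φ hf hu hv
  have A3f : ∀ u v : A, Stmt3Aux.C22 P (1-P) u → Stmt3Aux.C21 P (1-P) v →
      Φ (u+v) = Φ u + Φ v := fun u v hu hv => Stmt3Aux.claimC3f hc hann1 hann2 Φ hf hu hv
  have A3c : ∀ u v : A, Stmt3Aux.C22 P (1-P) u → Stmt3Aux.C12 P (1-P) v →
      Φ (u+v) = Φ u + Φ v := fun u v hu hv =>
    Stmt3Aux.claimC3c hc hann1 hann2 Φ hf hu hv A3a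
  have A3b : ∀ u v : A, Stmt3Aux.C11 P (1-P) u → Stmt3Aux.C21 P (1-P) v →
      Φ (u+v) = Φ u + Φ v := fun u v hu hv =>
    Stmt3Aux.claimC3b hc hann1 hann2 Φ hf hu hv A3c
  have A12 : ∀ u v : A, Stmt3Aux.C12 P (1-P) u → Stmt3Aux.C12 P (1-P) v →
      Φ (u+v) = Φ u + Φ v := fun u v hu hv =>
    Stmt3Aux.claimA12 hc hann1 hann2 Φ hf hu hv A2 A3a A3c
  have A21 : ∀ u v : A, Stmt3Aux.C21 P (1-P) u → Stmt3Aux.C21 P (1-P) v →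
      Φ (u+v) = Φ u + Φ v := fun u v hu hv =>
    Stmt3Aux.claimA21 hc hann1 hann2 Φ hf hu hv A2 A3f A3b A12
  have A11 : ∀ u v : A, Stmt3Aux.C11 P (1-P) u → Stmt3Aux.C11 P (1-P) v →
      Φ (u+v) = Φ u + Φ v := fun u v hu hv =>
    Stmt3Aux.claimA11 hc hann1 hann2 Φ hf hu hv A12
  have A22 : ∀ u v : A, Stmt3Aux.C22 P (1-P) u → Stmt3Aux.C22 P (1-P) v →
      Φ (u+v) = Φ u + Φ v := fun u v hu hv =>
    Stmt3Aux.claimA22 hc hann1 hann2 Φ hf hu hv A21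
  have AA : ∀ a b c d : A, Stmt3Aux.C11 P (1-P) a → Stmt3Aux.C12 P (1-P) b →
      Stmt3Aux.C21 P (1-P) c → Stmt3Aux.C22 P (1-P) d →
      Φ (a + b + c + d) = Φ a + Φ b + Φ c + Φ d := fun a b c d ha hb hcc hd =>
    Stmt3Aux.claimA hc hann1 hann2 Φ hf ha hb hcc hd A3b A3c
  -- assemble
  have dx := hc.decomp x
  have dy := hc.decomp y
  calc Φ (x + y)
      = Φ ((P*(x*P) + P*(y*P)) + (P*(x*(1-P)) + P*(y*(1-P)))
          + ((1-P)*(x*P) + (1-P)*(y*P)) + ((1-P)*(x*(1-P)) + (1-P)*(y*(1-P)))) := by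
        congr 1
        conv_lhs => rw [dx, dy]
        abel
    _ = Φ (P*(x*P) + P*(y*P)) + Φ (P*(x*(1-P)) + P*(y*(1-P)))
          + Φ ((1-P)*(x*P) + (1-P)*(y*P)) + Φ ((1-P)*(x*(1-P)) + (1-P)*(y*(1-P))) :=
        AA _ _ _ _ ((m11 x).add (m11 y)) ((m12 x).add (m12 y))
          ((m21 x).add (m21 y)) ((m22 x).add (m22 y))
    _ = (Φ (P*(x*P)) + Φ (P*(y*P))) + (Φ (P*(x*(1-P))) + Φ (P*(y*(1-P))))
          + (Φ ((1-P)*(x*P)) + Φ ((1-P)*(y*P)))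
          + (Φ ((1-P)*(x*(1-P))) + Φ ((1-P)*(y*(1-P)))) := by
        rw [A11 _ _ (m11 x) (m11 y), A12 _ _ (m12 x) (m12 y),
          A21 _ _ (m21 x) (m21 y), A22 _ _ (m22 x) (m22 y)]
    _ = (Φ (P*(x*P)) + Φ (P*(x*(1-P))) + Φ ((1-P)*(x*P)) + Φ ((1-P)*(x*(1-P))))
          + (Φ (P*(y*P)) + Φ (P*(y*(1-P))) + Φ ((1-P)*(y*P)) + Φ ((1-P)*(y*(1-P)))) := by
        abel
    _ = Φ (P*(x*P) + P*(x*(1-P)) + (1-P)*(x*P) + (1-P)*(x*(1-P)))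
          + Φ (P*(y*P) + P*(y*(1-P)) + (1-P)*(y*P) + (1-P)*(y*(1-P))) := by
        rw [AA _ _ _ _ (m11 x) (m12 x) (m21 x) (m22 x),
          AA _ _ _ _ (m11 y) (m12 y) (m21 y) (m22 y)]
    _ = Φ x + Φ y := by rw [← dx, ← dy]
end

section
/- Let A be a unital complex *-algebra with unit I and nontrivial projection P₁, and P₂ = I - P₁. Suppose Φ: A → A satisfies the mixed Jordan triple *-derivation identity and Φ(I) is a self-adjoint central element. Then P₁Φ(P₁)P₂ = -P₁Φ(P₂)P₂ and P₂Φ(P₁)P₁ = -P₂Φ(P₂)P₁. -/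
lemma halve_aux {A : Type*} [AddCommGroup A] [Module ℂ A] {x y : A}
    (h : 0 = x + x + (y + y)) : x + y = 0 := by
  have hz : (2:ℂ) • (x + y) = 0 := by
    rw [two_smul]
    rw [show (x + y) + (x + y) = x + x + (y + y) by abel]
    exact h.symm
  have := congrArg (fun z => ((2:ℂ)⁻¹) • z) hz
  simpa [smul_smul, inv_mul_cancel₀ (two_ne_zero (α := ℂ))] using this

theorem stmt12 {A : Type*} [Ring A] [StarRing A] [Algebra ℂ A]
    (P : A) (hPstar : star P = P) (hPidem : P * P = P) (hP0 : P ≠ 0) (hP1 : P ≠ 1)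
    (Φ : A → A)
    (hΦ : ∀ a b c : A, Φ (skw (jord a b) c) =
      skw (jord (Φ a) b) c + skw (jord a (Φ b)) c + skw (jord a b) (Φ c))
    (hsa : star (Φ 1) = Φ 1) (hcentral : ∀ a : A, Φ 1 * a = a * Φ 1) :
    P * Φ P * (1 - P) = -(P * Φ (1 - P) * (1 - P)) ∧
      (1 - P) * Φ P * P = -((1 - P) * Φ (1 - P) * P) := by
  set Q : A := 1 - P with hQdef
  have hQstar : star Q = Q := by simp [hQdef, hPstar]
  have hPQ : P * Q = 0 := by simp [hQdef, mul_sub, hPidem]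
  have hQP : Q * P = 0 := by simp [hQdef, sub_mul, hPidem]
  have hQQ : Q * Q = Q := by
    simp [hQdef, mul_sub, sub_mul, hPidem]
  have hPQ' : ∀ x : A, P * (Q * x) = 0 := fun x => by rw [← mul_assoc, hPQ, zero_mul]
  have hQP' : ∀ x : A, Q * (P * x) = 0 := fun x => by rw [← mul_assoc, hQP, zero_mul]
  have hPP' : ∀ x : A, P * (P * x) = P * x := fun x => by rw [← mul_assoc, hPidem]
  have hQQ' : ∀ x : A, Q * (Q * x) = Q * x := fun x => by rw [← mul_assoc, hQQ]
  have h0 : Φ 0 = 0 := by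
    have := hΦ 0 0 0
    simpa [jord, skw] using this
  have harg1 : skw (jord (1:A) P) Q = 0 := by
    simp [jord, skw, star_add, hPstar, hQstar, add_mul, mul_add, hPQ, hQP]
  have harg2 : skw (jord (1:A) Q) P = 0 := by
    simp [jord, skw, star_add, hPstar, hQstar, add_mul, mul_add, hPQ, hQP]
  have h1 := hΦ 1 P Q
  rw [harg1, h0] at h1
  have h2 := hΦ 1 Q P
  rw [harg2, h0] at h2
  have e1 := congrArg (fun x => P * x * Q) h1
  have e2 := congrArg (fun x => Q * x * P) h2
  simp only [jord, skw, star_add, star_sub, star_mul, star_one, hPstar, hQstar, hsa,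
    one_mul, mul_one, mul_add, add_mul, mul_sub, sub_mul, mul_assoc,
    hPQ', hQP', hPP', hQQ', hPQ, hQP, hPidem, hQQ, hcentral,
    mul_zero, zero_mul, zero_add, add_zero, zero_sub, sub_zero, neg_zero] at e1 e2
  constructor
  · rw [mul_assoc, mul_assoc]
    exact eq_neg_of_add_eq_zero_left (halve_aux e1)
  · rw [mul_assoc, mul_assoc]
    exact eq_neg_of_add_eq_zero_right (halve_aux e2)
end

section
/- Let A be a unital complex *-algebra, let P₁ be a projection and P₂ = I - P₁, and let A_{jk} = P_j A P_k. For A_{jk} ∈ A_{jk} and B_{jk} ∈ A_{jk} with j ≠ k, one has [(I/2)∙(P_j + A_{jk}), P_k + B_{jk}]_* = A_{jk} + B_{jk} - A_{jk}* - B_{jk}A_{jk}*. -/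
theorem stmt13 {A : Type*} [Ring A] [StarRing A] [Algebra ℂ A]
    (Q : A) (hQstar : star Q = Q) (hQidem : Q * Q = Q)
    (X Y : A) (hX : Q * X * (1 - Q) = X) (hY : Q * Y * (1 - Q) = Y) :
    skw (jord (((1 : ℂ) / 2) • (1 : A)) (Q + X)) ((1 - Q) + Y) =
      X + Y - star X - Y * star X := by
  have hQX : Q * X = X := by
    conv_lhs => rw [← hX, ← mul_assoc, ← mul_assoc, hQidem]
    exact hX
  have hXQ : X * Q = 0 := by
    rw [← hX]
    simp [mul_sub, sub_mul, mul_assoc, hQidem]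
  have hQY : Q * Y = Y := by
    conv_lhs => rw [← hY, ← mul_assoc, ← mul_assoc, hQidem]
    exact hY
  have hYQ : Y * Q = 0 := by
    rw [← hY]
    simp [mul_sub, sub_mul, mul_assoc, hQidem]
  have hsX : (1 - Q) * star X * Q = star X := by
    conv_rhs => rw [← hX]
    simp [star_mul, hQstar, mul_assoc]
  have hsXQ : star X * Q = star X := by
    conv_lhs => rw [← hsX, mul_assoc, hQidem]
    exact hsX
  have hQsX : Q * star X = 0 := by
    rw [← hsX]
    simp [sub_mul, mul_sub, ← mul_assoc, hQidem]
  have hXY : X * Y = 0 := by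
    rw [← hQY, ← mul_assoc, hXQ, zero_mul]
  -- the scalar `(1/2) • 1` is central and self-adjoint
  set c : A := ((1 : ℂ) / 2) • (1 : A) with hc
  have hc2 : c * 2 = 1 := by
    rw [hc, smul_mul_assoc, one_mul, show (2 : A) = 1 + 1 from (one_add_one_eq_two).symm,
      smul_add, ← add_smul]
    norm_num
  have h2sc : (2 : A) * star c = 1 := by
    have : star ((2 : A)) = (2 : A) := by simp
    rw [← this, ← star_mul, hc2, star_one]
  have hsc : star c = c := by
    calc star c = (c * 2) * star c := by rw [hc2, one_mul]
    _ = c * ((2 : A) * star c) := by rw [mul_assoc]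
    _ = c := by rw [h2sc, mul_one]
  have hjord : jord c (Q + X) = Q + X := by
    unfold jord
    rw [hsc, hc, smul_mul_assoc, mul_smul_comm, one_mul, mul_one, ← add_smul]
    norm_num
  rw [hjord]
  unfold skw
  rw [star_add, hQstar]
  have e1 : (Q + X) * (1 - Q + Y) = X + Y := by
    simp [mul_add, add_mul, mul_sub, sub_mul, hQidem, hQY, hXQ, hXY]
  have e2 : (1 - Q + Y) * (Q + star X) = star X + Y * star X := by
    simp [mul_add, add_mul, mul_sub, sub_mul, hQidem, hQsX, hYQ, hsXQ]
  rw [e1, e2]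
  abel
end

section
/- Let A be a unital complex *-algebra with a projection P₁ and P₂ = I - P₁, and let φ: A → A be an additive map with φ(P₁) = φ(P₂) = 0 that satisfies φ([A,B]_*) = [φ(A), B]_* + [A, φ(B)]_* for all A, B (where [A,B]_* = AB - BA*). Then for j ≠ k, φ maps P_j A P_k into P_j A P_k: for any X with P_j X P_k = X, one has P_j φ(X) P_k = φ(X). -/
theorem stmt14 {A : Type*} [Ring A] [StarRing A] [Algebra ℂ A]
    (Q : A) (hQstar : star Q = Q) (hQidem : Q * Q = Q)
    (φ : A → A)
    (hadd : ∀ a b : A, φ (a + b) = φ a + φ b)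
    (hQ : φ Q = 0) (hQ' : φ (1 - Q) = 0)
    (hskw : ∀ a b : A, φ (skw a b) = skw (φ a) b + skw a (φ b)) :
    ∀ X : A, Q * X * (1 - Q) = X → Q * φ X * (1 - Q) = φ X := by
  intro X hX
  have hQX : Q * X = X := by
    conv_lhs => rw [← hX]
    rw [← mul_assoc, ← mul_assoc, hQidem, hX]
  have hXQ : X * Q = 0 := by
    conv_lhs => rw [← hX]
    have h0 : (1 - Q) * Q = 0 := by rw [sub_mul, one_mul, hQidem, sub_self]
    rw [mul_assoc, h0, mul_zero]
  have hskwQX : skw Q X = X := by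
    simp [skw, hQstar, hQX, hXQ]
  have key := hskw Q X
  rw [hskwQX, hQ] at key
  simp only [skw, hQstar, star_zero, zero_mul, mul_zero, sub_zero, zero_sub, neg_zero,
    zero_add] at key
  set Y := φ X with hY
  have hk : Y = Q * Y - Y * Q := key
  have h1 : Q * Y * Q = 0 := by
    have : Q * Y = Q * (Q * Y - Y * Q) := by rw [← hk]
    rw [mul_sub, ← mul_assoc, hQidem] at this
    have := sub_eq_self.mp this.symm
    rw [← mul_assoc] at this
    exact this
  have h2 : Y * Q + Y * Q = 0 := by
    have : Y * Q = (Q * Y - Y * Q) * Q := by rw [← hk]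
    rw [sub_mul, mul_assoc Y Q Q, hQidem, h1, zero_sub] at this
    exact eq_neg_iff_add_eq_zero.mp this
  have hYQ : Y * Q = 0 := by
    have h2' : (2 : ℂ) • (Y * Q) = 0 := by
      rw [two_smul]; exact h2
    have := congrArg (fun z => ((2 : ℂ)⁻¹) • z) h2'
    simpa [smul_smul] using this
  have hQY : Q * Y = Y := by rw [hk, hYQ, sub_zero, ← mul_assoc, hQidem]
  rw [mul_sub, mul_one, hQY, hYQ, sub_zero]
end
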